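/- arXiv:2411.06281 — 5 statements merged into one kernel-verified Lean document; each statement's English description precedes it below -/
import Mathlib

section
/- Let H be a Hilbert space, A a densely defined self-adjoint operator on H, (Ω, μ) a measure space, m : Ω → ℝ measurable with associated self-adjoint multiplication operator T on L²(Ω,μ), and U : H → L²(Ω,μ) an isometry such that T ∘ U extends U ∘ A (i.e. for all x ∈ dom(A), U x ∈ dom(T) and T(U x) = U(A x)). Then: (1) the range U(H) reduces T, i.e. proj_{U(H)} ∘ T ⊆ T ∘ proj_{U(H)} as graphs; and (2) U ∘ A = T ∘ U, i.e. for every x ∈ H, U x ∈ dom(T) implies x ∈ dom(A). -/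
/-!
The resolvent `R = (T + i)⁻¹` is multiplication by the bounded function `(m + i)⁻¹`, and its
adjoint is multiplication by `(m - i)⁻¹`. Since `R (U (A x + c x)) = U x` on `dom A` and `A + c`
has dense range for non-real `c`, both operators map the closed subspace `U(H)` into itself, so the
projection `P` commutes with `R`; as `dom T = range R` and `T R = 1 - i R`, this makes `P` commute
with `T`. For (2), symmetry of `T` shows that `U* (T (U x))` is a value of `A* x` whenever
`U x ∈ dom T`, and `A* = A`.
-/

open MeasureTheory InnerProductSpace ComplexConjugate

section

variable {𝕜 E : Type*} [RCLike 𝕜] [NormedAddCommGroup E] [InnerProductSpace 𝕜 E]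

theorem IsSelfAdjoint.isFormalAdjoint [CompleteSpace E] {A : E →ₗ.[𝕜] E}
    (hA : IsSelfAdjoint A) : A.IsFormalAdjoint A := by
  simpa only [LinearPMap.isSelfAdjoint_def.mp hA] using
    LinearPMap.adjoint_isFormalAdjoint hA.dense_domain (T := A)

theorem IsSelfAdjoint.dense_range_add_smul [CompleteSpace E] {A : E →ₗ.[𝕜] E}
    (hA : IsSelfAdjoint A) {c : 𝕜} (hc : conj c ≠ c) :
    Dense (Set.range fun x : A.domain => A x + c • (x : E)) := by
  set V := LinearMap.range (A.toFun + c • A.domain.subtype)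
  have hV : (Set.range fun x : A.domain => A x + c • (x : E)) = V := by
    ext; simp [V]
  rw [hV, Submodule.dense_iff_topologicalClosure_eq_top,
    Submodule.topologicalClosure_eq_top_iff, Submodule.eq_bot_iff]
  intro y hy
  have hAy : ∀ x : A.domain, ⟪y, A x⟫_𝕜 = -c * ⟪y, (x : E)⟫_𝕜 := by
    intro x
    have := V.inner_left_of_mem_orthogonal (LinearMap.mem_range_self _ x) hy
    simp only [LinearMap.add_apply, LinearMap.smul_apply, Submodule.subtype_apply,
      LinearPMap.toFun_eq_coe, inner_add_right, inner_smul_right] at this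
    linear_combination this
  have hy_dom : y ∈ A.domain := by
    rw [← hA.star_eq]
    refine LinearPMap.mem_adjoint_domain_of_exists y ⟨-conj c • y, fun x => ?_⟩
    simp [inner_smul_left, hAy]
  -- `⟪y, A y⟫ = -c ‖y‖²` is real because `A` is symmetric, and `c` is not
  have hsymm := hA.isFormalAdjoint ⟨y, hy_dom⟩ ⟨y, hy_dom⟩
  rw [← inner_conj_symm, hAy, map_mul, map_neg, inner_conj_symm] at hsymm
  have : (c - conj c) * ⟪y, y⟫_𝕜 = 0 := by linear_combination hsymm
  simpa [sub_eq_zero, Ne.symm hc] using this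

theorem IsSelfAdjoint.mapsTo_range_of_leftInverse_add_smul {H : Type*} [NormedAddCommGroup H]
    [InnerProductSpace 𝕜 H] [CompleteSpace H] {A : H →ₗ.[𝕜] H} (hA : IsSelfAdjoint A)
    (U : H →ₗᵢ[𝕜] E) {T : E →ₗ.[𝕜] E}
    (hext : ∀ x : A.domain, ∃ h : U x ∈ T.domain, T ⟨U x, h⟩ = U (A x))
    {R : E →L[𝕜] E} {c : 𝕜} (hc : conj c ≠ c) (hRT : ∀ f : T.domain, R (T f + c • f) = f) :
    Set.MapsTo R (Set.range U) (Set.range U) := by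
  have hRU : ∀ x : A.domain, R (U (A x + c • (x : H))) = U x := by
    intro x
    obtain ⟨h, hx⟩ := hext x
    simpa [hx] using hRT ⟨U x, h⟩
  have hclosed : IsClosed {x : H | R (U x) ∈ Set.range U} :=
    U.isometry.isClosedEmbedding.isClosed_range.preimage (by fun_prop)
  rintro _ ⟨x, rfl⟩
  refine hclosed.closure_subset_iff.mpr ?_ (hA.dense_range_add_smul hc x)
  rintro _ ⟨x, rfl⟩
  exact ⟨x, (hRU x).symm⟩

theorem Submodule.starProjection_apply_comm [CompleteSpace E] {K : Submodule 𝕜 E}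
    [K.HasOrthogonalProjection] {B : E →L[𝕜] E} (hB : Set.MapsTo B K K)
    (hB' : Set.MapsTo (ContinuousLinearMap.adjoint B) K K) (y : E) :
    K.starProjection (B y) = B (K.starProjection y) :=
  K.eq_starProjection_of_mem_of_inner_eq_zero (hB (K.starProjection_apply_mem y)) fun w hw => by
    rw [← map_sub, ← ContinuousLinearMap.adjoint_inner_right,
      K.inner_left_of_mem_orthogonal (hB' hw) (K.sub_starProjection_mem_orthogonal y)]

theorem IsSelfAdjoint.mem_domain_of_isometry {H : Type*} [NormedAddCommGroup H]
    [InnerProductSpace 𝕜 H] [CompleteSpace H] [CompleteSpace E] {A : H →ₗ.[𝕜] H}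
    (hA : IsSelfAdjoint A) (U : H →ₗᵢ[𝕜] E) {T : E →ₗ.[𝕜] E} (hT : T.IsFormalAdjoint T)
    (hext : ∀ x : A.domain, ∃ h : U x ∈ T.domain, T ⟨U x, h⟩ = U (A x))
    {x : H} (hx : U x ∈ T.domain) : x ∈ A.domain := by
  rw [← LinearPMap.isSelfAdjoint_def.mp hA]
  refine LinearPMap.mem_adjoint_domain_of_exists x
    ⟨ContinuousLinearMap.adjoint U.toContinuousLinearMap (T ⟨U x, hx⟩), fun z => ?_⟩
  obtain ⟨hz, hTz⟩ := hext z
  calc _ = ⟪T ⟨U x, hx⟩, U z⟫_𝕜 := ContinuousLinearMap.adjoint_inner_left _ _ _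
    _ = ⟪U x, T ⟨U z, hz⟩⟫_𝕜 := hT ⟨U x, hx⟩ ⟨U z, hz⟩
    _ = ⟪x, A z⟫_𝕜 := by rw [hTz, U.inner_map_map]

end

theorem LinearPMap.exists_apply_eq_of_commute_resolvent {R E : Type*} [Ring R] [AddCommGroup E]
    [Module R E] {T : E →ₗ.[R] E} {S : E → E} {Q : E →ₗ[R] E} {c : R}
    (hTS : ∀ g, ∃ h : S g ∈ T.domain, T ⟨S g, h⟩ + c • S g = g)
    (hST : ∀ f : T.domain, S (T f + c • f) = f) (hQS : ∀ y, Q (S y) = S (Q y))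
    (f : T.domain) : ∃ h : Q f ∈ T.domain, T ⟨Q f, h⟩ = Q (T f) := by
  have hQf : Q f = S (Q (T f + c • f)) := by rw [← hQS, hST]
  obtain ⟨h, hT⟩ := hTS (Q (T f + c • f))
  refine ⟨hQf ▸ h, ?_⟩
  rw [show (⟨Q f, _⟩ : T.domain) = ⟨_, h⟩ from Subtype.ext hQf, eq_sub_of_add_eq hT, ← hQf,
    Q.map_add, Q.map_smul, add_sub_cancel_right]

theorem Complex.ofReal_add_ne_zero (x : ℝ) {c : ℂ} (hc : c.im ≠ 0) : (x : ℂ) + c ≠ 0 :=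
  fun h => hc (by simpa using congrArg Complex.im h)

theorem Complex.norm_inv_ofReal_add_le (x : ℝ) {c : ℂ} (hc : c.im ≠ 0) :
    ‖((x : ℂ) + c)⁻¹‖ ≤ |c.im|⁻¹ := by
  rw [norm_inv]
  exact inv_anti₀ (abs_pos.2 hc) (by simpa using Complex.abs_im_le_norm ((x : ℂ) + c))

section MultiplicationOperator

variable {Ω : Type*} [MeasurableSpace Ω] {μ : Measure Ω} {m : Ω → ℝ}

structure IsMultiplicationOperator (μ : Measure Ω) (m : Ω → ℝ)
    (T : Lp ℂ 2 μ →ₗ.[ℂ] Lp ℂ 2 μ) : Prop where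
  mem_domain_iff : ∀ f : Lp ℂ 2 μ, f ∈ T.domain ↔ MemLp (fun ω => (m ω : ℂ) * f ω) 2 μ
  coeFn_apply : ∀ f : T.domain, (T f : Ω → ℂ) =ᵐ[μ] fun ω => (m ω : ℂ) * (f : Lp ℂ 2 μ) ω

theorem memLp_top_inv_ofReal_add (hm : AEMeasurable m μ) {c : ℂ} (hc : c.im ≠ 0) :
    MemLp (fun ω => ((m ω : ℂ) + c)⁻¹) ⊤ μ :=
  memLp_top_of_bound
    ((Complex.measurable_ofReal.comp_aemeasurable hm).add_const c).inv.aestronglyMeasurable _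
    (ae_of_all _ fun ω => Complex.norm_inv_ofReal_add_le (m ω) hc)

variable (μ) in
/-- Multiplication by `(m + c)⁻¹`, i.e. `(T + c)⁻¹` for the multiplication operator `T` by `m`. -/
noncomputable def resolventMul (hm : AEMeasurable m μ) {c : ℂ} (hc : c.im ≠ 0) :
    Lp ℂ 2 μ →L[ℂ] Lp ℂ 2 μ :=
  (ContinuousLinearMap.mul ℂ ℂ).holderL μ ⊤ 2 2 (memLp_top_inv_ofReal_add hm hc).toLp

theorem coeFn_resolventMul (hm : AEMeasurable m μ) {c : ℂ} (hc : c.im ≠ 0) (f : Lp ℂ 2 μ) :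
    resolventMul μ hm hc f =ᵐ[μ] fun ω => ((m ω : ℂ) + c)⁻¹ * f ω := by
  rw [resolventMul, ContinuousLinearMap.holderL_apply_apply]
  filter_upwards [(ContinuousLinearMap.mul ℂ ℂ).coeFn_holder (p := ⊤) (r := 2) _ f,
    (memLp_top_inv_ofReal_add hm hc).coeFn_toLp] with ω h1 h2
  rw [h1, ContinuousLinearMap.mul_apply', h2]

theorem adjoint_resolventMul (hm : AEMeasurable m μ) {c : ℂ} (hc : c.im ≠ 0) :
    ContinuousLinearMap.adjoint (resolventMul μ hm hc) =
      resolventMul μ hm (c := conj c) (by simpa using hc) := by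
  refine ((ContinuousLinearMap.eq_adjoint_iff _ _).2 fun f g => ?_).symm
  rw [L2.inner_def, L2.inner_def]
  refine integral_congr_ae ?_
  filter_upwards [coeFn_resolventMul hm (c := conj c) (by simpa using hc) f,
    coeFn_resolventMul hm hc g] with ω h1 h2
  rw [RCLike.inner_apply, RCLike.inner_apply, h1, h2]
  simp only [map_mul, map_inv₀, map_add, Complex.conj_ofReal, Complex.conj_conj]
  ring

namespace IsMultiplicationOperator

variable {T : Lp ℂ 2 μ →ₗ.[ℂ] Lp ℂ 2 μ}

theorem isFormalAdjoint (hT : IsMultiplicationOperator μ m T) : T.IsFormalAdjoint T := by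
  intro f g
  rw [L2.inner_def, L2.inner_def]
  refine integral_congr_ae ?_
  filter_upwards [hT.coeFn_apply f, hT.coeFn_apply g] with ω h1 h2
  rw [RCLike.inner_apply, RCLike.inner_apply, h1, h2, map_mul, Complex.conj_ofReal]
  ring

theorem resolventMul_apply_add_smul (hT : IsMultiplicationOperator μ m T) (hm : AEMeasurable m μ)
    {c : ℂ} (hc : c.im ≠ 0) (f : T.domain) : resolventMul μ hm hc (T f + c • f) = f := by
  refine Lp.ext ?_
  filter_upwards [coeFn_resolventMul hm hc (T f + c • f), Lp.coeFn_add (T f) (c • (f : Lp ℂ 2 μ)),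
    Lp.coeFn_smul c (f : Lp ℂ 2 μ), hT.coeFn_apply f] with ω h1 h2 h3 h4
  rw [h1, h2, Pi.add_apply, h3, Pi.smul_apply, smul_eq_mul, h4]
  field_simp [Complex.ofReal_add_ne_zero (m ω) hc]

theorem exists_apply_resolventMul_add_smul (hT : IsMultiplicationOperator μ m T)
    (hm : AEMeasurable m μ) {c : ℂ} (hc : c.im ≠ 0) (g : Lp ℂ 2 μ) :
    ∃ h : resolventMul μ hm hc g ∈ T.domain,
      T ⟨resolventMul μ hm hc g, h⟩ + c • resolventMul μ hm hc g = g := by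
  set R := resolventMul μ hm hc
  have hmR : (fun ω => (m ω : ℂ) * R g ω) =ᵐ[μ] ⇑(g - c • R g) := by
    filter_upwards [coeFn_resolventMul hm hc g, Lp.coeFn_sub g (c • R g), Lp.coeFn_smul c (R g)]
      with ω h1 h2 h3
    rw [h2, Pi.sub_apply, h3, Pi.smul_apply, smul_eq_mul, h1]
    field_simp [Complex.ofReal_add_ne_zero (m ω) hc]
    ring
  have hmem : R g ∈ T.domain := (hT.mem_domain_iff _).2 ((Lp.memLp _).ae_eq hmR.symm)
  exact ⟨hmem, eq_sub_iff_add_eq.1 (Lp.ext ((hT.coeFn_apply ⟨_, hmem⟩).trans hmR))⟩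

end IsMultiplicationOperator

end MultiplicationOperator

theorem stmt6_general {H : Type*} [NormedAddCommGroup H] [InnerProductSpace ℂ H] [CompleteSpace H]
    {Ω : Type*} [MeasurableSpace Ω] (μ : Measure Ω)
    (A : H →ₗ.[ℂ] H) (hAsa : A.adjoint = A)
    (m : Ω → ℝ) (hm : Measurable m)
    (T : Lp ℂ 2 μ →ₗ.[ℂ] Lp ℂ 2 μ)
    (hTdom : ∀ f : Lp ℂ 2 μ,
      f ∈ T.domain ↔ MemLp (fun ω => (m ω : ℂ) * f ω) 2 μ)
    (hTval : ∀ f : T.domain,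
      (T f : Ω → ℂ) =ᵐ[μ] fun ω => (m ω : ℂ) * (f : Lp ℂ 2 μ) ω)
    (U : H →ₗᵢ[ℂ] Lp ℂ 2 μ)
    (hext : ∀ x : A.domain, ∃ h : U x ∈ T.domain, T ⟨U x, h⟩ = U (A x))
    (P : Lp ℂ 2 μ →L[ℂ] Lp ℂ 2 μ)
    (hP : ∀ y : Lp ℂ 2 μ,
      P y ∈ Set.range U ∧ ∀ z ∈ Set.range U, ⟪y - P y, z⟫_ℂ = 0) :
    (∀ f : T.domain, ∃ h : P (f : Lp ℂ 2 μ) ∈ T.domain, T ⟨P f, h⟩ = P (T f)) ∧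
    (∀ x : H, U x ∈ T.domain → x ∈ A.domain) := by
  have hA : IsSelfAdjoint A := hAsa
  have hT : IsMultiplicationOperator μ m T := ⟨hTdom, hTval⟩
  let K := LinearMap.range U.toLinearMap
  have hK : (K : Set (Lp ℂ 2 μ)) = Set.range U := LinearMap.coe_range _
  have : CompleteSpace K := U.isometry.isClosedEmbedding.isClosed_range.completeSpace_coe
  have hPK : ∀ y, P y = K.starProjection y := fun y =>
    (K.eq_starProjection_of_mem_of_inner_eq_zero (by rw [← SetLike.mem_coe, hK]; exact (hP y).1)
      fun w hw => (hP y).2 w (hK ▸ hw)).symm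
  have hI : Complex.I.im ≠ 0 := by simp
  have hI' : (conj Complex.I).im ≠ 0 := by simp
  have hR := hA.mapsTo_range_of_leftInverse_add_smul U hext (Complex.conj_eq_iff_im.not.2 hI)
    (hT.resolventMul_apply_add_smul hm.aemeasurable hI)
  have hR' := hA.mapsTo_range_of_leftInverse_add_smul U hext (Complex.conj_eq_iff_im.not.2 hI')
    (hT.resolventMul_apply_add_smul hm.aemeasurable hI')
  refine ⟨LinearPMap.exists_apply_eq_of_commute_resolvent (Q := P.toLinearMap)
    (hT.exists_apply_resolventMul_add_smul hm.aemeasurable hI)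
    (hT.resolventMul_apply_add_smul hm.aemeasurable hI) fun y => ?_,
    fun x hx => hA.mem_domain_of_isometry U hT.isFormalAdjoint hext hx⟩
  rw [ContinuousLinearMap.coe_coe, hPK, hPK]
  refine K.starProjection_apply_comm (hK ▸ hR) ?_ y
  rw [adjoint_resolventMul]
  exact hK ▸ hR'

/-- If `A` is densely defined and self-adjoint on `H`, `T` is the self-adjoint
multiplication operator by a measurable real function `m` on `L²(Ω,μ)`, and `U : H → L²(Ω,μ)` is
an isometry such that `T ∘ U` extends `U ∘ A`, then (1) the range of `U` reduces `T`
(`proj_{U(H)} ∘ T ⊆ T ∘ proj_{U(H)}`), and (2) `U ∘ A = T ∘ U`, i.e. `U x ∈ dom T → x ∈ dom A`. -/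
theorem stmt6 {H : Type*} [NormedAddCommGroup H] [InnerProductSpace ℂ H] [CompleteSpace H]
    {Ω : Type*} [MeasurableSpace Ω] (μ : Measure Ω)
    (A : H →ₗ.[ℂ] H) (hAdense : Dense (A.domain : Set H)) (hAsa : A.adjoint = A)
    (m : Ω → ℝ) (hm : Measurable m)
    (T : Lp ℂ 2 μ →ₗ.[ℂ] Lp ℂ 2 μ)
    (hTdom : ∀ f : Lp ℂ 2 μ,
      f ∈ T.domain ↔ MemLp (fun ω => (m ω : ℂ) * f ω) 2 μ)
    (hTval : ∀ f : T.domain,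
      (T f : Ω → ℂ) =ᵐ[μ] fun ω => (m ω : ℂ) * (f : Lp ℂ 2 μ) ω)
    (hTsa : T.adjoint = T)
    (U : H →ₗᵢ[ℂ] Lp ℂ 2 μ)
    (hext : ∀ x : A.domain, ∃ h : U x ∈ T.domain, T ⟨U x, h⟩ = U (A x))
    (P : Lp ℂ 2 μ →L[ℂ] Lp ℂ 2 μ)
    (hP : ∀ y : Lp ℂ 2 μ,
      P y ∈ Set.range U ∧ ∀ z ∈ Set.range U, ⟪y - P y, z⟫_ℂ = 0) :
    (∀ f : T.domain, ∃ h : P (f : Lp ℂ 2 μ) ∈ T.domain, T ⟨P f, h⟩ = P (T f)) ∧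
    (∀ x : H, U x ∈ T.domain → x ∈ A.domain) :=
  stmt6_general μ A hAsa m hm T hTdom hTval U hext P hP
end

section
/- The set of functions { x ↦ exp(2πi q x) · exp(-x²) : q ∈ ℚ } spans a dense subspace of L²(ℝ, Lebesgue). Equivalently, if f ∈ L²(ℝ) satisfies ∫_ℝ f(x) · exp(-2πi q x) · exp(-x²) dx = 0 for all q ∈ ℚ, then f = 0 a.e. -/
/-!
The function `g = e^{-x²} f` is integrable (a product of two `L²` functions), and the hypothesis
says that its Fourier transform vanishes at every rational point. Being continuous, `𝓕 g`
vanishes identically. Since `𝓕` is self-dual (`∫ φ • 𝓕 g = ∫ 𝓕 φ • g`) and surjective on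
Schwartz space, `g` integrates to zero against every test function, so `g = 0` a.e.; as the
Gaussian has no zeros, `f = 0`.
-/

open MeasureTheory Real Complex FourierTransform SchwartzMap
open scoped ContDiff

section

variable {V E : Type*} [NormedAddCommGroup V] [InnerProductSpace ℝ V] [FiniteDimensional ℝ V]
  [MeasurableSpace V] [BorelSpace V] [NormedAddCommGroup E] [NormedSpace ℂ E] [CompleteSpace E]

theorem MeasureTheory.Integrable.integral_smul_fourier_eq {f : V → E} (hf : Integrable f)
    (φ : 𝓢(V, ℂ)) : ∫ ξ, φ ξ • 𝓕 f ξ = ∫ x, 𝓕 φ x • f x := by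
  simpa using! VectorFourier.integral_bilin_fourierIntegral_eq_flip
    (ContinuousLinearMap.lsmul ℂ ℂ).flip (L := innerₗ V)
    continuous_fourierChar continuous_inner hf φ.integrable

theorem MeasureTheory.Integrable.ae_eq_zero_of_fourier_eq_zero {f : V → E} (hf : Integrable f)
    (h : 𝓕 f = 0) : f =ᵐ[volume] 0 := by
  refine ae_eq_zero_of_integral_contDiff_smul_eq_zero hf.locallyIntegrable fun g hg hg_supp ↦ ?_
  have hφ : ContDiff ℝ ∞ (ofRealCLM ∘ g) := by fun_prop
  let φ : 𝓢(V, ℂ) := (hg_supp.comp_left (g := ofRealCLM) rfl).toSchwartzMap hφ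
  calc ∫ x, g x • f x = ∫ x, 𝓕 (𝓕⁻ φ) x • f x := by simp [φ]
    _ = 0 := by rw [← hf.integral_smul_fourier_eq, h]; simp

theorem MeasureTheory.Integrable.ae_eq_zero_of_fourier_eqOn_zero {f : V → E} (hf : Integrable f)
    {s : Set V} (hs : Dense s) (h : Set.EqOn (𝓕 f) 0 s) : f =ᵐ[volume] 0 :=
  hf.ae_eq_zero_of_fourier_eq_zero <|
    (VectorFourier.fourierIntegral_continuous continuous_fourierChar continuous_inner hf).ext_on
      hs continuous_zero h

end

theorem memLp_two_cexp_neg_mul_sq {b : ℂ} (hb : 0 < b.re) :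
    MemLp (fun x : ℝ ↦ cexp (-b * (x : ℂ) ^ 2)) 2 := by
  rw [memLp_two_iff_integrable_sq_norm (by fun_prop)]
  refine (integrable_cexp_neg_mul_sq (b := 2 * b) (by simpa using hb)).norm.congr
    (.of_forall fun x ↦ ?_)
  simp only [Complex.norm_exp, ← Real.exp_nat_mul]
  congr 1
  simp [Complex.mul_re, ← ofReal_pow]
  ring

/-- The family `{x ↦ exp(2πiqx)·exp(-x²) : q ∈ ℚ}` spans a dense subspace
of `L²(ℝ)`; equivalently, if `f ∈ L²(ℝ)` satisfies
`∫ f(x) exp(-2πiqx) exp(-x²) dx = 0` for all rationals `q`, then `f = 0` a.e. -/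
theorem stmt14 (f : Lp ℂ 2 (volume : Measure ℝ))
    (hf : ∀ q : ℚ, ∫ x : ℝ, (f : ℝ → ℂ) x *
        Complex.exp (-2 * Real.pi * Complex.I * (q : ℂ) * (x : ℂ)) *
        Complex.exp (-(x : ℂ) ^ 2) = 0) :
    f = 0 := by
  have hgauss : MemLp (fun x : ℝ ↦ cexp (-(x : ℂ) ^ 2)) 2 := by
    simpa using memLp_two_cexp_neg_mul_sq (b := 1) (by simp)
  have hg : Integrable fun x : ℝ ↦ cexp (-(x : ℂ) ^ 2) * f x :=
    hgauss.integrable_mul (Lp.memLp f)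
  have hFg : Set.EqOn (𝓕 fun x : ℝ ↦ cexp (-(x : ℂ) ^ 2) * f x) 0 (Set.range ((↑) : ℚ → ℝ)) := by
    rintro _ ⟨q, rfl⟩
    rw [Real.fourier_real_eq_integral_exp_smul, Pi.zero_apply, ← hf q]
    congr 1 with x
    rw [smul_eq_mul]
    push_cast
    ring_nf
  rw [Lp.eq_zero_iff_ae_eq_zero]
  filter_upwards [hg.ae_eq_zero_of_fourier_eqOn_zero Rat.denseRange_cast hFg] with x hx
  simpa [Complex.exp_ne_zero] using hx
end

section
/- Let p ≥ 1 and f : ℝ → ℂ be continuous, in L^p(ℝ), and with |f| decreasing at infinity (there is m ∈ ℕ such that x > y ≥ m implies |f(x)| ≤ |f(y)| and x < y ≤ -m implies |f(x)| ≤ |f(y)|). Fix r ∈ ℤ. For each N ∈ ℕ choose sample points c_k^N ∈ [(k+r)/N, (k+r+1)/N] and define the step function f_N = Σ_{-N² ≤ k < N²} f(c_k^N) · 1_{[k/N, (k+1)/N)}. Then f_N → f in L^p(ℝ) as N → ∞. -/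
/-!
The step functions are dominated, uniformly in `N`, by one `L^p` function: a sample point lies
within `R = |r| + 1` of `x`, so on the tails the monotone decay of `‖f‖` bounds `‖f_N x‖` by
`‖f (x ∓ R)‖`, and on the compact middle part `f` is bounded. Since `f_N x → f x` pointwise by
continuity, dominated convergence gives the convergence in `L^p`.
-/

open MeasureTheory Filter Topology
open scoped ENNReal

theorem tendsto_eLpNorm_sub_of_dominated {α E ι : Type*} {mα : MeasurableSpace α}
    {μ : Measure α} [NormedAddCommGroup E] {p : ℝ≥0∞} {l : Filter ι} [l.IsCountablyGenerated]
    {F : ι → α → E} {f : α → E} {g : α → ℝ} (hp : p ≠ ∞)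
    (hF : ∀ᶠ n in l, AEStronglyMeasurable (F n) μ) (hf : MemLp f p μ) (hg : MemLp g p μ)
    (hbound : ∀ᶠ n in l, ∀ᵐ x ∂μ, ‖F n x‖ ≤ g x)
    (hlim : ∀ᵐ x ∂μ, Tendsto (fun n ↦ F n x) l (𝓝 (f x))) :
    Tendsto (fun n ↦ eLpNorm (F n - f) p μ) l (𝓝 0) := by
  rcases eq_or_ne p 0 with rfl | hp0
  · simpa using tendsto_const_nhds
  have hq : 0 < p.toReal := ENNReal.toReal_pos hp0 hp
  have hdom : MemLp (fun x ↦ g x + ‖f x‖) p μ := hg.add hf.norm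
  have hlintegral : Tendsto (fun n ↦ ∫⁻ x, ‖F n x - f x‖ₑ ^ p.toReal ∂μ) l (𝓝 0) := by
    have := tendsto_lintegral_filter_of_dominated_convergence' (l := l) (μ := μ)
      (F := fun n x ↦ ‖F n x - f x‖ₑ ^ p.toReal) (f := fun _ ↦ 0)
      (fun x ↦ ‖g x + ‖f x‖‖ₑ ^ p.toReal) ?_ ?_
      (lintegral_rpow_enorm_lt_top_of_eLpNorm_lt_top hp0 hp hdom.eLpNorm_lt_top).ne ?_
    · simpa using this
    · filter_upwards [hF] with n hFn
      exact ((hFn.sub hf.1).enorm).pow_const _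
    · filter_upwards [hbound] with n hn
      filter_upwards [hn] with x hx
      gcongr
      rw [enorm_le_iff_norm_le, Real.norm_eq_abs]
      calc ‖F n x - f x‖ ≤ ‖F n x‖ + ‖f x‖ := norm_sub_le _ _
        _ ≤ g x + ‖f x‖ := by gcongr
        _ ≤ |g x + ‖f x‖| := le_abs_self _
    · filter_upwards [hlim] with x hx
      have hx0 : Tendsto (fun n ↦ F n x - f x) l (𝓝 0) := by
        simpa using hx.sub_const (f x)
      have := (((ENNReal.continuous_rpow_const (y := p.toReal)).comp
        (continuous_enorm (E := E))).tendsto 0).comp hx0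
      simpa [Function.comp_def, ENNReal.zero_rpow_of_pos hq] using this
  have := ((ENNReal.continuous_rpow_const (y := 1 / p.toReal)).tendsto 0).comp hlintegral
  simp_rw [eLpNorm_eq_lintegral_rpow_enorm_toReal hp0 hp]
  simpa [Function.comp_def, ENNReal.zero_rpow_of_pos (inv_pos.2 hq)] using this

theorem exists_memLp_ge_norm_of_abs_sub_le {E : Type*} [NormedAddCommGroup E] {p : ℝ≥0∞}
    {f : ℝ → E} {m : ℝ} (hf : Continuous f) (hLp : MemLp f p volume)
    (hright : AntitoneOn (fun x ↦ ‖f x‖) (Set.Ici m))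
    (hleft : MonotoneOn (fun x ↦ ‖f x‖) (Set.Iic (-m))) (R : ℝ) :
    ∃ g : ℝ → ℝ, MemLp g p volume ∧ ∀ x y, |y - x| ≤ R → ‖f y‖ ≤ g x := by
  set B := |m| + R
  obtain ⟨M, hM⟩ := (isCompact_Icc (a := -(B + R)) (b := B + R)).exists_bound_of_continuousOn
    hf.continuousOn
  refine ⟨fun x ↦ ‖f (x - R)‖ + ‖f (x + R)‖ + (Set.Icc (-B) B).indicator (fun _ ↦ M) x,
    ((hLp.comp_measurePreserving (measurePreserving_sub_right volume R)).norm.add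
      (hLp.comp_measurePreserving (measurePreserving_add_right volume R)).norm).add
      (memLp_indicator_const p measurableSet_Icc M (Or.inr (by simp [Real.volume_Icc]))),
    fun x y hxy ↦ ?_⟩
  dsimp only
  obtain ⟨hyx₁, hyx₂⟩ := abs_sub_le_iff.1 hxy
  have hm₁ := le_abs_self m
  have hm₂ := neg_abs_le m
  have h₁ := norm_nonneg (f (x - R))
  have h₂ := norm_nonneg (f (x + R))
  by_cases hx : x ∈ Set.Icc (-B) B
  · have hy : ‖f y‖ ≤ M := hM y ⟨by linarith [hx.1], by linarith [hx.2]⟩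
    rw [Set.indicator_of_mem hx]
    linarith
  rw [Set.indicator_of_notMem hx, add_zero]
  rcases not_and_or.1 hx with hxl | hxr
  · have hy : ‖f y‖ ≤ ‖f (x + R)‖ :=
      hleft (Set.mem_Iic.2 (by linarith)) (Set.mem_Iic.2 (by linarith)) (by linarith)
    linarith
  · have hy : ‖f y‖ ≤ ‖f (x - R)‖ :=
      hright (Set.mem_Ici.2 (by linarith)) (Set.mem_Ici.2 (by linarith)) (by linarith)
    linarith

section GridStep

variable {E : Type*}

noncomputable def gridStepFun [AddCommMonoid E] (N : ℕ) (a : ℤ → E) (x : ℝ) : E :=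
  ∑ k ∈ Finset.Ico (-(N : ℤ) ^ 2) ((N : ℤ) ^ 2),
    Set.indicator (Set.Ico ((k : ℝ) / N) (((k : ℝ) + 1) / N)) (fun _ ↦ a k) x

theorem mem_Ico_div_iff_floor_eq {N : ℝ} (hN : 0 < N) {k : ℤ} {x : ℝ} :
    x ∈ Set.Ico ((k : ℝ) / N) (((k : ℝ) + 1) / N) ↔ ⌊N * x⌋ = k := by
  rw [Set.mem_Ico, div_le_iff₀ hN, lt_div_iff₀ hN, mul_comm x, Int.floor_eq_iff]

theorem gridStepFun_eq [AddCommMonoid E] {N : ℕ} (hN : 0 < N) (a : ℤ → E) (x : ℝ) :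
    gridStepFun N a x =
      if ⌊(N : ℝ) * x⌋ ∈ Finset.Ico (-(N : ℤ) ^ 2) ((N : ℤ) ^ 2) then a ⌊(N : ℝ) * x⌋ else 0 := by
  simp only [gridStepFun, Set.indicator_apply, mem_Ico_div_iff_floor_eq (Nat.cast_pos.2 hN)]
  exact Finset.sum_ite_eq _ _ _

theorem norm_gridStepFun_le [NormedAddCommGroup E] (N : ℕ) (a : ℤ → E) (x : ℝ) :
    ‖gridStepFun N a x‖ ≤ ‖a ⌊(N : ℝ) * x⌋‖ := by
  rcases N.eq_zero_or_pos with rfl | hN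
  · simp [gridStepFun]
  rw [gridStepFun_eq hN]
  split_ifs
  exacts [le_rfl, norm_zero.trans_le (norm_nonneg _)]

theorem stronglyMeasurable_gridStepFun [AddCommMonoid E] [TopologicalSpace E] [ContinuousAdd E]
    (N : ℕ) (a : ℤ → E) : StronglyMeasurable (gridStepFun N a) :=
  Finset.stronglyMeasurable_fun_sum _ fun _ _ ↦ stronglyMeasurable_const.indicator measurableSet_Ico

theorem eventually_floor_mem_Ico (x : ℝ) :
    ∀ᶠ N : ℕ in atTop, ⌊(N : ℝ) * x⌋ ∈ Finset.Ico (-(N : ℤ) ^ 2) ((N : ℤ) ^ 2) := by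
  filter_upwards [eventually_gt_atTop ⌈|x|⌉₊] with N hN
  have hx : |x| < N := (Nat.le_ceil _).trans_lt (by exact_mod_cast hN)
  have hN0 : (0 : ℝ) ≤ N := N.cast_nonneg
  obtain ⟨hx₁, hx₂⟩ := abs_lt.1 hx
  rw [Finset.mem_Ico, Int.le_floor, Int.floor_lt]
  push_cast
  constructor <;> nlinarith

theorem tendsto_gridStepFun [AddCommMonoid E] [TopologicalSpace E] {a : ℕ → ℤ → E} {x : ℝ}
    {y : E} (h : Tendsto (fun N : ℕ ↦ a N ⌊(N : ℝ) * x⌋) atTop (𝓝 y)) :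
    Tendsto (fun N ↦ gridStepFun N (a N) x) atTop (𝓝 y) := by
  refine h.congr' ?_
  filter_upwards [eventually_floor_mem_Ico x, eventually_gt_atTop 0] with N hmem hN
  rw [gridStepFun_eq hN, if_pos hmem]

end GridStep

theorem abs_sub_le_of_mem_Icc_floor {N r c x : ℝ} (hN : 0 < N)
    (hc : c ∈ Set.Icc ((⌊N * x⌋ + r) / N) ((⌊N * x⌋ + r + 1) / N)) :
    |c - x| ≤ (|r| + 1) / N := by
  rw [Set.mem_Icc, div_le_iff₀ hN, le_div_iff₀ hN] at hc
  rw [le_div_iff₀ hN, ← abs_of_pos hN, ← abs_mul, abs_le]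
  have := Int.floor_le (N * x)
  have := Int.lt_floor_add_one (N * x)
  constructor <;> cases abs_cases r <;> nlinarith

theorem tendsto_sample_floor {r : ℝ} {c : ℕ → ℤ → ℝ}
    (hc : ∀ (N : ℕ) (k : ℤ), c N k ∈ Set.Icc (((k : ℝ) + r) / N) (((k : ℝ) + r + 1) / N))
    (x : ℝ) : Tendsto (fun N : ℕ ↦ c N ⌊(N : ℝ) * x⌋) atTop (𝓝 x) := by
  rw [tendsto_iff_dist_tendsto_zero]
  refine squeeze_zero' (Eventually.of_forall fun _ ↦ dist_nonneg) ?_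
    (tendsto_const_div_atTop_nhds_zero_nat (|r| + 1))
  filter_upwards [eventually_gt_atTop 0] with N hN
  exact abs_sub_le_of_mem_Icc_floor (Nat.cast_pos.2 hN) (hc N _)

theorem stmt15_general (p : ℝ) (f : ℝ → ℂ)
    (hcont : Continuous f)
    (hLp : MemLp f (ENNReal.ofReal p) (volume : Measure ℝ))
    (hdec : ∃ m : ℕ,
      (∀ x y : ℝ, (m : ℝ) ≤ y → y < x → ‖f x‖ ≤ ‖f y‖) ∧
      (∀ x y : ℝ, y ≤ -(m : ℝ) → x < y → ‖f x‖ ≤ ‖f y‖))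
    (r : ℤ) (c : ℕ → ℤ → ℝ)
    (hc : ∀ (N : ℕ) (k : ℤ),
      c N k ∈ Set.Icc (((k : ℝ) + r) / N) (((k : ℝ) + r + 1) / N))
    (fN : ℕ → ℝ → ℂ)
    (hfN : ∀ (N : ℕ) (x : ℝ), fN N x =
      ∑ k ∈ Finset.Ico (-(N : ℤ) ^ 2) ((N : ℤ) ^ 2),
        Set.indicator (Set.Ico ((k : ℝ) / N) (((k : ℝ) + 1) / N)) (fun _ => f (c N k)) x) :
    Tendsto (fun N : ℕ => eLpNorm (fun x => fN N x - f x) (ENNReal.ofReal p) volume)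
      atTop (nhds 0) := by
  obtain ⟨m, hm_right, hm_left⟩ := hdec
  have hright : AntitoneOn (fun x ↦ ‖f x‖) (Set.Ici (m : ℝ)) :=
    antitoneOn_iff_forall_lt.2 fun y hy x _ hyx ↦ hm_right x y hy hyx
  have hleft : MonotoneOn (fun x ↦ ‖f x‖) (Set.Iic (-(m : ℝ))) :=
    monotoneOn_iff_forall_lt.2 fun x _ y hy hxy ↦ hm_left x y hy hxy
  obtain ⟨g, hg, hfg⟩ :=
    exists_memLp_ge_norm_of_abs_sub_le hcont hLp hright hleft (|(r : ℝ)| + 1)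
  obtain rfl : fN = fun N ↦ gridStepFun N (fun k ↦ f (c N k)) := by
    ext N x; exact hfN N x
  refine tendsto_eLpNorm_sub_of_dominated ENNReal.ofReal_ne_top
    (.of_forall fun N ↦ (stronglyMeasurable_gridStepFun N _).aestronglyMeasurable) hLp hg ?_
    (ae_of_all _ fun x ↦ tendsto_gridStepFun ((hcont.tendsto x).comp (tendsto_sample_floor hc x)))
  filter_upwards [eventually_gt_atTop 0] with N hN
  refine ae_of_all _ fun x ↦ (norm_gridStepFun_le N _ x).trans (hfg x _ ?_)
  calc |c N ⌊(N : ℝ) * x⌋ - x| ≤ (|(r : ℝ)| + 1) / N :=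
        abs_sub_le_of_mem_Icc_floor (Nat.cast_pos.2 hN) (hc N _)
    _ ≤ |(r : ℝ)| + 1 := div_le_self (by positivity) (Nat.one_le_cast.2 hN)

/-- Let `p ≥ 1`, `f : ℝ → ℂ` continuous, in `L^p(ℝ)`, with `|f|` decreasing
at infinity.  For each `N`, choose sample points `c N k ∈ [(k+r)/N, (k+r+1)/N]` and form the
step function `f_N = ∑_{-N² ≤ k < N²} f(c N k) 1_{[k/N,(k+1)/N)}`.  Then `f_N → f` in `L^p`. -/
theorem stmt15 (p : ℝ) (hp : 1 ≤ p) (f : ℝ → ℂ)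
    (hcont : Continuous f)
    (hLp : MemLp f (ENNReal.ofReal p) (volume : Measure ℝ))
    (hdec : ∃ m : ℕ,
      (∀ x y : ℝ, (m : ℝ) ≤ y → y < x → ‖f x‖ ≤ ‖f y‖) ∧
      (∀ x y : ℝ, y ≤ -(m : ℝ) → x < y → ‖f x‖ ≤ ‖f y‖))
    (r : ℤ) (c : ℕ → ℤ → ℝ)
    (hc : ∀ (N : ℕ) (k : ℤ),
      c N k ∈ Set.Icc (((k : ℝ) + r) / N) (((k : ℝ) + r + 1) / N))
    (fN : ℕ → ℝ → ℂ)
    (hfN : ∀ (N : ℕ) (x : ℝ), fN N x =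
      ∑ k ∈ Finset.Ico (-(N : ℤ) ^ 2) ((N : ℤ) ^ 2),
        Set.indicator (Set.Ico ((k : ℝ) / N) (((k : ℝ) + 1) / N)) (fun _ => f (c N k)) x) :
    Tendsto (fun N : ℕ => eLpNorm (fun x => fN N x - f x) (ENNReal.ofReal p) volume)
      atTop (nhds 0) :=
  stmt15_general p f hcont hLp hdec r c hc fN hfN
end

section
/- Let (Ω, 𝒜, μ) be a measure space, m : Ω → ℝ measurable, and for V ∈ Borel(ℝ) define P̂(V) : L²(Ω,μ) → L²(Ω,μ) by P̂(V) f = 1_{m⁻¹(V)} · f. Then P̂ is a projection-valued measure on Borel(ℝ), and the spectral integral ∫_ℝ id dP̂ equals the multiplication operator T by m (with domain { f : m f ∈ L² }), including equality of domains. -/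
/-!
Everything reduces to almost-everywhere identities between indicator functions, organised by the
image measure `κ_f = m_*(‖f‖² μ)`. Since `P̂(V)` is multiplication by `1_{m⁻¹(V)}`,
`‖P̂(V) f‖² = κ_f(V)`, and since `P̂(V)` is an orthogonal projection, `⟪P̂(V) f, f⟫ = ‖P̂(V) f‖²`;
hence `ν_f = κ_f`. Countable additivity of `P̂` comes from that of the finite measure `κ_f`: the
tail `P̂(⋃ Vₙ) f - ∑_{n ∈ s} P̂(Vₙ) f = P̂(⋃ Vₙ \ ⋃_{n ∈ s} Vₙ) f` has squared norm
`κ_f(⋃ Vₙ \ ⋃_{n ∈ s} Vₙ)`, which tends to `0`. The domain and quadratic-form statements are the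
changes of variables `∫ t² dκ_f = ∫ m² ‖f‖² dμ` and `∫ t dκ_f = ∫ m ‖f‖² dμ`.
-/

open MeasureTheory InnerProductSpace
open Filter Topology Function
open scoped NNReal ENNReal

theorem MeasureTheory.eLpNorm_two_sq {Ω E : Type*} [MeasurableSpace Ω] {μ : Measure Ω}
    [NormedAddCommGroup E] (f : Ω → E) : eLpNorm f 2 μ ^ 2 = ∫⁻ ω, ‖f ω‖ₑ ^ 2 ∂μ := by
  simpa using eLpNorm_nnreal_pow_eq_lintegral (f := f) (μ := μ) (p := 2) two_ne_zero

theorem MeasureTheory.L2.norm_sq_eq_lintegral {Ω E : Type*} [MeasurableSpace Ω]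
    {μ : Measure Ω} [NormedAddCommGroup E] (f : Lp E 2 μ) :
    ‖f‖ ^ 2 = (∫⁻ ω, ‖f ω‖ₑ ^ 2 ∂μ).toReal := by
  rw [Lp.norm_def, ← ENNReal.toReal_pow, eLpNorm_two_sq]

section SqNormImage

variable {Ω α E : Type*} [MeasurableSpace Ω] [MeasurableSpace α] [NormedAddCommGroup E]

/-- For `f ∈ L²` this is the spectral measure `ν_f(V) = ⟪P̂(V) f, f⟫`. -/
noncomputable def sqNormImage (μ : Measure Ω) (m : Ω → α) (f : Ω → E) : Measure α :=
  (μ.withDensity fun ω => ((‖f ω‖₊ ^ 2 : ℝ≥0) : ℝ≥0∞)).map m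

variable {μ : Measure Ω}

theorem sqNormImage_apply {m : Ω → α} (hm : Measurable m) (f : Ω → E) {V : Set α}
    (hV : MeasurableSet V) : sqNormImage μ m f V = ∫⁻ ω in m ⁻¹' V, ‖f ω‖ₑ ^ 2 ∂μ := by
  rw [sqNormImage, Measure.map_apply hm hV, withDensity_apply _ (hm hV)]
  rfl

theorem isFiniteMeasure_sqNormImage {m : Ω → α} (hm : Measurable m) {f : Ω → E}
    (hf : MemLp f 2 μ) : IsFiniteMeasure (sqNormImage μ m f) := by
  refine ⟨?_⟩
  rw [sqNormImage_apply hm f .univ, Set.preimage_univ, Measure.restrict_univ, ← eLpNorm_two_sq]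
  exact ENNReal.pow_lt_top hf.eLpNorm_lt_top

theorem integral_id_sqNormImage {m : Ω → ℝ} (hm : Measurable m) {f : Ω → E}
    (hf : AEStronglyMeasurable f μ) :
    ∫ t, t ∂(sqNormImage μ m f) = ∫ ω, m ω * ‖f ω‖ ^ 2 ∂μ := by
  rw [sqNormImage, integral_map (f := fun t : ℝ => t) hm.aemeasurable aestronglyMeasurable_id,
    integral_withDensity_eq_integral_smul₀ (hf.nnnorm.aemeasurable.pow_const 2)]
  congr with ω
  simp [NNReal.smul_def, mul_comm]

theorem memLp_two_ofReal_smul_iff_integrable_sq {𝕜 : Type*} [RCLike 𝕜] [NormedSpace 𝕜 E]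
    {m : Ω → ℝ} (hm : Measurable m) {f : Ω → E} (hf : AEStronglyMeasurable f μ) :
    MemLp (fun ω => (m ω : 𝕜) • f ω) 2 μ ↔
      Integrable (fun t : ℝ => t ^ 2) (sqNormImage μ m f) := by
  have hmf : AEStronglyMeasurable (fun ω => (m ω : 𝕜) • f ω) μ := by fun_prop
  rw [memLp_two_iff_integrable_sq_norm hmf, sqNormImage,
    integrable_map_measure (by fun_prop) hm.aemeasurable,
    integrable_withDensity_iff_integrable_smul₀ (hf.nnnorm.aemeasurable.pow_const 2)]
  refine integrable_congr (ae_of_all _ fun ω => ?_)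
  simp [norm_smul, mul_pow, NNReal.smul_def, mul_comm]

end SqNormImage

section IndicatorOperators

variable {Ω α 𝕜 E : Type*} [MeasurableSpace Ω] [MeasurableSpace α] {μ : Measure Ω}

def IsPreimageIndicator [NormedField 𝕜] [NormedAddCommGroup E] [NormedSpace 𝕜 E]
    (m : Ω → α) (P : Set α → Lp E 2 μ →L[𝕜] Lp E 2 μ) : Prop :=
  ∀ V, MeasurableSet V → ∀ f : Lp E 2 μ, (P V f : Ω → E) =ᵐ[μ] (m ⁻¹' V).indicator f

namespace IsPreimageIndicator

section Normed

variable [NormedField 𝕜] [NormedAddCommGroup E] [NormedSpace 𝕜 E]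
  {m : Ω → α} {P : Set α → Lp E 2 μ →L[𝕜] Lp E 2 μ}

theorem apply_empty (hP : IsPreimageIndicator m P) : P ∅ = 0 :=
  ContinuousLinearMap.ext fun f => Lp.ext <| by
    filter_upwards [hP ∅ .empty f, Lp.coeFn_zero E 2 μ] with ω hf h0
    rw [zero_apply, h0, hf, Set.preimage_empty, Set.indicator_empty]
    rfl

theorem apply_univ (hP : IsPreimageIndicator m P) : P Set.univ = 1 :=
  ContinuousLinearMap.ext fun f => Lp.ext <| by
    filter_upwards [hP Set.univ .univ f] with ω hf
    simp [hf]

theorem apply_inter (hP : IsPreimageIndicator m P) {V₁ V₂ : Set α} (hV₁ : MeasurableSet V₁)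
    (hV₂ : MeasurableSet V₂) : P (V₁ ∩ V₂) = (P V₁).comp (P V₂) :=
  ContinuousLinearMap.ext fun f => Lp.ext <| by
    filter_upwards [hP _ (hV₁.inter hV₂) f, hP V₁ hV₁ (P V₂ f), hP V₂ hV₂ f] with ω h₁₂ h₁ h₂
    rw [ContinuousLinearMap.comp_apply, h₁₂, h₁, Set.preimage_inter, ← Set.indicator_indicator]
    by_cases hω : ω ∈ m ⁻¹' V₁ <;> simp [hω, h₂]

theorem comp_self (hP : IsPreimageIndicator m P) {V : Set α} (hV : MeasurableSet V) :
    (P V).comp (P V) = P V := by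
  rw [← hP.apply_inter hV hV, Set.inter_self]

theorem apply_sdiff (hP : IsPreimageIndicator m P) {U V : Set α} (hU : MeasurableSet U)
    (hV : MeasurableSet V) (hUV : U ⊆ V) (f : Lp E 2 μ) : P (V \ U) f = P V f - P U f :=
  Lp.ext <| by
    filter_upwards [hP _ (hV.diff hU) f, hP V hV f, hP U hU f, Lp.coeFn_sub (P V f) (P U f)]
      with ω hdiff hVω hUω hsub
    rw [hdiff, hsub, Pi.sub_apply, hVω, hUω, Set.preimage_sdiff,
      Set.indicator_sdiff (Set.preimage_mono hUV)]
    rfl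

theorem sum_apply_eq_apply_biUnion {ι : Type*} (hP : IsPreimageIndicator m P)
    {V : ι → Set α} (hV : ∀ i, MeasurableSet (V i)) (hd : Pairwise (Disjoint on V)) (s : Finset ι)
    (f : Lp E 2 μ) : ∑ i ∈ s, P (V i) f = P (⋃ i ∈ s, V i) f :=
  Lp.ext <| by
    have hVi : ∀ᵐ ω ∂μ, ∀ i ∈ s, P (V i) f ω = (m ⁻¹' V i).indicator f ω :=
      (eventually_all_finset s).2 fun i _ => hP (V i) (hV i) f
    filter_upwards [Lp.coeFn_fun_finsetSum s fun i => P (V i) f,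
      hP _ (s.measurableSet_biUnion fun i _ => hV i) f, hVi] with ω hsum hU hVi
    rw [hsum, hU, Set.preimage_iUnion₂, Finset.indicator_biUnion_apply]
    · exact Finset.sum_congr rfl hVi
    · exact fun i _ j _ hij => (hd hij).preimage m

theorem norm_sq_apply (hP : IsPreimageIndicator m P) (hm : Measurable m) {V : Set α}
    (hV : MeasurableSet V) (f : Lp E 2 μ) :
    ‖P V f‖ ^ 2 = (sqNormImage μ m f V).toReal := by
  rw [L2.norm_sq_eq_lintegral, sqNormImage_apply hm f hV, ← lintegral_indicator (hm hV)]
  congr 1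
  refine lintegral_congr_ae ?_
  filter_upwards [hP V hV f] with ω hf
  rw [hf, enorm_indicator_eq_indicator_enorm]
  by_cases hω : ω ∈ m ⁻¹' V <;> simp [hω]

end Normed

section Hilbert

variable [RCLike 𝕜] [NormedAddCommGroup E] [InnerProductSpace 𝕜 E]
  {m : Ω → α} {P : Set α → Lp E 2 μ →L[𝕜] Lp E 2 μ}

theorem isSymmetric (hP : IsPreimageIndicator m P) {V : Set α} (hV : MeasurableSet V) :
    (P V : Lp E 2 μ →ₗ[𝕜] Lp E 2 μ).IsSymmetric := fun f g => by
  rw [L2.inner_def, L2.inner_def]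
  refine integral_congr_ae ?_
  filter_upwards [hP V hV f, hP V hV g] with ω hf hg
  by_cases hω : ω ∈ m ⁻¹' V <;> simp [hf, hg, hω]

theorem isSelfAdjoint [CompleteSpace E] (hP : IsPreimageIndicator m P) {V : Set α}
    (hV : MeasurableSet V) : IsSelfAdjoint (P V) :=
  (hP.isSymmetric hV).isSelfAdjoint

theorem re_inner_apply_self (hP : IsPreimageIndicator m P) {V : Set α} (hV : MeasurableSet V)
    (f : Lp E 2 μ) : RCLike.re ⟪P V f, f⟫_𝕜 = ‖P V f‖ ^ 2 :=
  calc RCLike.re ⟪P V f, f⟫_𝕜 = RCLike.re ⟪P V (P V f), f⟫_𝕜 := by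
        rw [← ContinuousLinearMap.comp_apply, hP.comp_self hV]
    _ = RCLike.re ⟪P V f, P V f⟫_𝕜 := congrArg RCLike.re (hP.isSymmetric hV _ _)
    _ = ‖P V f‖ ^ 2 := inner_self_eq_norm_sq _

theorem ofReal_re_inner_apply_self (hP : IsPreimageIndicator m P) (hm : Measurable m)
    {V : Set α} (hV : MeasurableSet V) (f : Lp E 2 μ) :
    ENNReal.ofReal (RCLike.re ⟪P V f, f⟫_𝕜) = sqNormImage μ m f V := by
  have := isFiniteMeasure_sqNormImage hm (Lp.memLp f)
  rw [hP.re_inner_apply_self hV, hP.norm_sq_apply hm hV,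
    ENNReal.ofReal_toReal (measure_ne_top _ _)]

theorem hasSum_apply_iUnion {ι : Type*} [Countable ι] (hP : IsPreimageIndicator m P)
    (hm : Measurable m) {V : ι → Set α} (hV : ∀ i, MeasurableSet (V i))
    (hd : Pairwise (Disjoint on V)) (f : Lp E 2 μ) :
    HasSum (fun i => P (V i) f) (P (⋃ i, V i) f) := by
  have := isFiniteMeasure_sqNormImage hm (Lp.memLp f)
  set κ := sqNormImage μ m f
  let R : Finset ι → Set α := fun s => (⋃ i, V i) \ ⋃ i ∈ s, V i
  have hR : ∀ s, MeasurableSet (R s) := fun s =>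
    (MeasurableSet.iUnion hV).diff (s.measurableSet_biUnion fun i _ => hV i)
  have hκR : Tendsto (fun s => κ (R s)) atTop (𝓝 0) := by
    have hR_anti : Antitone R := fun s t hst => Set.sdiff_subset_sdiff_right
      (Set.biUnion_subset_biUnion_left (Finset.coe_subset.2 hst))
    have hR_inter : ⋂ s, R s = ∅ := Set.eq_empty_of_forall_notMem fun x hx => by
      obtain ⟨i, hi⟩ := Set.mem_iUnion.1 (Set.mem_iInter.1 hx ∅).1
      exact (Set.mem_iInter.1 hx {i}).2 (Set.mem_biUnion (Finset.mem_singleton_self i) hi)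
    simpa [hR_inter, Function.comp_def] using tendsto_measure_iInter_atTop
      (fun s => (hR s).nullMeasurableSet) hR_anti ⟨∅, measure_ne_top κ _⟩
  have hnorm : ∀ s, ‖∑ i ∈ s, P (V i) f - P (⋃ i, V i) f‖ = Real.sqrt (κ (R s)).toReal := by
    intro s
    rw [← hP.norm_sq_apply hm (hR s), Real.sqrt_sq (norm_nonneg _), norm_sub_rev,
      hP.sum_apply_eq_apply_biUnion hV hd,
      hP.apply_sdiff (s.measurableSet_biUnion fun i _ => hV i) (MeasurableSet.iUnion hV)
        (Set.iUnion₂_subset_iUnion _ _)]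
  rw [HasSum, tendsto_iff_norm_sub_tendsto_zero]
  simp only [hnorm]
  simpa [Function.comp_def] using (Real.continuous_sqrt.tendsto 0).comp
    ((ENNReal.tendsto_toReal ENNReal.zero_ne_top).comp hκR)

end Hilbert

end IsPreimageIndicator

end IndicatorOperators

/-- For a measurable `m : Ω → ℝ`, the assignment
`P̂(V) f = 1_{m⁻¹(V)} · f` on `L²(Ω,μ)` is a projection-valued measure on `Borel(ℝ)`, and the
spectral integral `∫ id dP̂` coincides with the multiplication operator `T` by `m`, including
equality of domains: with `ν_f(V) = ⟪P̂(V) f, f⟫`, one has `m·f ∈ L² ↔ ∫ t² dν_f < ∞`, and in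
that case the quadratic form satisfies `∫ t dν_f = ∫ m |f|² dμ = ⟪f, T f⟫`. -/
theorem stmt16 {Ω : Type*} [MeasurableSpace Ω] (μ : Measure Ω)
    (m : Ω → ℝ) (hm : Measurable m)
    (Phat : Set ℝ → (Lp ℂ 2 μ →L[ℂ] Lp ℂ 2 μ))
    (hPhat : ∀ V : Set ℝ, MeasurableSet V → ∀ f : Lp ℂ 2 μ,
      (Phat V f : Ω → ℂ) =ᵐ[μ] (m ⁻¹' V).indicator f)
    (ν : Lp ℂ 2 μ → Measure ℝ)
    (hν : ∀ (f : Lp ℂ 2 μ) (V : Set ℝ), MeasurableSet V →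
      ν f V = ENNReal.ofReal ((⟪Phat V f, f⟫_ℂ).re)) :
    (∀ V : Set ℝ, MeasurableSet V →
      IsSelfAdjoint (Phat V) ∧ (Phat V).comp (Phat V) = Phat V) ∧
    Phat ∅ = 0 ∧
    Phat Set.univ = 1 ∧
    (∀ V₁ V₂ : Set ℝ, MeasurableSet V₁ → MeasurableSet V₂ →
      Phat (V₁ ∩ V₂) = (Phat V₁).comp (Phat V₂)) ∧
    (∀ V : ℕ → Set ℝ, (∀ n, MeasurableSet (V n)) →
      Pairwise (Function.onFun Disjoint V) →
      ∀ f : Lp ℂ 2 μ, HasSum (fun n => Phat (V n) f) (Phat (⋃ n, V n) f)) ∧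
    (∀ f : Lp ℂ 2 μ,
      MemLp (fun ω => (m ω : ℂ) * f ω) 2 μ ↔ Integrable (fun t : ℝ => t ^ 2) (ν f)) ∧
    (∀ f : Lp ℂ 2 μ, MemLp (fun ω => (m ω : ℂ) * f ω) 2 μ →
      ∫ t, t ∂(ν f) = ∫ ω, m ω * Complex.normSq (f ω) ∂μ) := by
  have hP : IsPreimageIndicator m Phat := hPhat
  have hν_eq : ∀ f, ν f = sqNormImage μ m f := fun f =>
    Measure.ext fun V hV => (hν f V hV).trans (hP.ofReal_re_inner_apply_self hm hV f)
  refine ⟨fun V hV => ⟨hP.isSelfAdjoint hV, hP.comp_self hV⟩, hP.apply_empty, hP.apply_univ,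
    fun V₁ V₂ => hP.apply_inter, fun V hV hd f => hP.hasSum_apply_iUnion hm hV hd f,
    fun f => ?_, fun f _ => ?_⟩
  · rw [hν_eq]
    simpa using memLp_two_ofReal_smul_iff_integrable_sq (𝕜 := ℂ) hm (Lp.aestronglyMeasurable f)
  · simp only [hν_eq, integral_id_sqNormImage hm (Lp.aestronglyMeasurable f),
      Complex.normSq_eq_norm_sq]
end

section
/- Let (Ω,μ) be a measure space, m : Ω → ℝ measurable, T the multiplication operator by m on L²(Ω,μ), and M ⊆ L²(Ω,μ) a closed subspace that reduces T (proj_M ∘ T ⊆ T ∘ proj_M). Then for any f ∈ M, any reals a ≤ b, and any k ∈ ℕ, setting f_k = proj_M(1_{m⁻¹([-k,k])} f), one has 1_{m⁻¹([a,b])} · f_k ∈ M, and consequently 1_{m⁻¹([a,b])} · f ∈ M. -/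
open MeasureTheory InnerProductSpace Filter Set
open scoped ENNReal Topology NNReal

/-- L² dominated convergence: `eLpNorm (F n - G) 2 μ → 0`. -/
lemma stmt18_dct {Ω : Type*} [MeasurableSpace Ω] {μ : Measure Ω}
    (F : ℕ → Ω → ℂ) (G bound : Ω → ℂ)
    (hF : ∀ n, AEStronglyMeasurable (F n) μ) (hbound : MemLp bound 2 μ)
    (hdom : ∀ n, ∀ᵐ ω ∂μ, ‖F n ω‖ ≤ ‖bound ω‖)
    (hlim : ∀ᵐ ω ∂μ, Tendsto (fun n => F n ω) atTop (𝓝 (G ω))) :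
    Tendsto (fun n => eLpNorm (fun ω => F n ω - G ω) 2 μ) atTop (𝓝 0) := by
  have hG : AEStronglyMeasurable G μ := aestronglyMeasurable_of_tendsto_ae atTop hF hlim
  have hGb : ∀ᵐ ω ∂μ, ‖G ω‖ ≤ ‖bound ω‖ := by
    filter_upwards [ae_all_iff.2 hdom, hlim] with ω h1 h2
    exact le_of_tendsto h2.norm (Eventually.of_forall h1)
  set Φ : ℕ → Ω → ℝ≥0∞ := fun n ω => (‖F n ω - G ω‖₊ : ℝ≥0∞) ^ (2 : ℝ) with hΦ
  set ψ : Ω → ℝ≥0∞ := fun ω => ((2 : ℝ≥0∞) * (‖bound ω‖₊ : ℝ≥0∞)) ^ (2 : ℝ) with hψ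
  have hb2 : ∫⁻ ω, (‖bound ω‖₊ : ℝ≥0∞) ^ (2 : ℝ) ∂μ < ∞ := by
    have := lintegral_rpow_enorm_lt_top_of_eLpNorm_lt_top (μ := μ) (f := bound)
      (p := 2) (by norm_num) (by norm_num) hbound.2
    simpa [enorm_eq_nnnorm] using this
  have hψfin : ∫⁻ ω, ψ ω ∂μ ≠ ∞ := by
    have : ∫⁻ ω, ψ ω ∂μ = (2 : ℝ≥0∞) ^ (2 : ℝ) * ∫⁻ ω, (‖bound ω‖₊ : ℝ≥0∞) ^ (2 : ℝ) ∂μ := by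
      rw [← lintegral_const_mul' _ _ (by norm_num : (2 : ℝ≥0∞) ^ (2:ℝ) ≠ ∞)]
      refine lintegral_congr fun ω => ?_
      simp only [hψ]
      exact ENNReal.mul_rpow_of_nonneg _ _ (by norm_num)
    rw [this]
    exact ENNReal.mul_ne_top (by norm_num) hb2.ne
  have key : Tendsto (fun n => ∫⁻ ω, Φ n ω ∂μ) atTop (𝓝 0) := by
    have h0 : (0 : ℝ≥0∞) = ∫⁻ _ω, (0 : ℝ≥0∞) ∂μ := by simp
    rw [h0]
    refine tendsto_lintegral_of_dominated_convergence' ψ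
      (fun n => ?_) (fun n => ?_) hψfin ?_
    · exact ENNReal.continuous_rpow_const.measurable.comp_aemeasurable ((hF n).sub hG).enorm
    · filter_upwards [hdom n, hGb] with ω h1 h2
      refine ENNReal.rpow_le_rpow ?_ (by norm_num)
      have h3 : ‖F n ω - G ω‖ ≤ 2 * ‖bound ω‖ :=
        (norm_sub_le (F n ω) (G ω)).trans (by linarith)
      have hnn : ‖F n ω - G ω‖₊ ≤ (2 : ℝ≥0) * ‖bound ω‖₊ := by
        rw [← NNReal.coe_le_coe]
        push_cast [coe_nnnorm]
        exact h3
      exact (ENNReal.coe_le_coe.2 hnn).trans_eq (by push_cast; ring)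
    · filter_upwards [hlim] with ω hω
      have h1 : Tendsto (fun n => F n ω - G ω) atTop (𝓝 0) := by
        simpa using hω.sub (tendsto_const_nhds (x := G ω))
      have h2 : Tendsto (fun n => (‖F n ω - G ω‖₊ : ℝ≥0∞)) atTop (𝓝 0) := by
        rw [← ENNReal.coe_zero]
        exact ENNReal.tendsto_coe.2 (by simpa using h1.nnnorm)
      have h3 := (ENNReal.continuous_rpow_const (y := (2:ℝ))).tendsto 0 |>.comp h2
      simpa [ENNReal.zero_rpow_of_pos, hΦ, Function.comp_def] using h3
  have heq : ∀ n, eLpNorm (fun ω => F n ω - G ω) 2 μ = (∫⁻ ω, Φ n ω ∂μ) ^ (1 / (2:ℝ)) := by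
    intro n
    rw [eLpNorm_eq_lintegral_rpow_enorm_toReal (by norm_num) (by norm_num)]
    norm_num [hΦ, enorm_eq_nnnorm]
  have h4 := (ENNReal.continuous_rpow_const (y := 1 / (2:ℝ))).tendsto 0 |>.comp key
  have h5 : ((0:ℝ≥0∞)) ^ (1/(2:ℝ)) = 0 := ENNReal.zero_rpow_of_pos (by norm_num)
  rw [h5] at h4
  exact h4.congr fun n => (heq n).symm


/-- Let `T` be the multiplication operator by a measurable `m : Ω → ℝ` on
`L²(Ω,μ)` and `M` a closed subspace reducing `T` (`proj_M ∘ T ⊆ T ∘ proj_M`).  Then for any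
`f ∈ M`, reals `a ≤ b`, and `k ∈ ℕ`, setting `f_k = proj_M (1_{m⁻¹([-k,k])} f)`, one has
`1_{m⁻¹([a,b])} · f_k ∈ M`, and consequently `1_{m⁻¹([a,b])} · f ∈ M`. -/
theorem stmt18 {Ω : Type*} [MeasurableSpace Ω] (μ : Measure Ω)
    (m : Ω → ℝ) (hm : Measurable m)
    (T : Lp ℂ 2 μ →ₗ.[ℂ] Lp ℂ 2 μ)
    (hTdom : ∀ f : Lp ℂ 2 μ,
      f ∈ T.domain ↔ MemLp (fun ω => (m ω : ℂ) * f ω) 2 μ)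
    (hTval : ∀ f : T.domain,
      (T f : Ω → ℂ) =ᵐ[μ] fun ω => (m ω : ℂ) * (f : Lp ℂ 2 μ) ω)
    (M : Submodule ℂ (Lp ℂ 2 μ)) (hMclosed : IsClosed (M : Set (Lp ℂ 2 μ)))
    (Pm : Lp ℂ 2 μ →L[ℂ] Lp ℂ 2 μ)
    (hPm : ∀ y : Lp ℂ 2 μ, Pm y ∈ M ∧ ∀ z ∈ M, ⟪y - Pm y, z⟫_ℂ = 0)
    (hred : ∀ f : T.domain, ∃ h : Pm (f : Lp ℂ 2 μ) ∈ T.domain,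
      T ⟨Pm f, h⟩ = Pm (T f)) :
    ∀ f : Lp ℂ 2 μ, f ∈ M → ∀ a b : ℝ, a ≤ b → ∀ k : ℕ,
      ∀ fk : Lp ℂ 2 μ,
        (fk : Ω → ℂ) =ᵐ[μ] (m ⁻¹' Set.Icc (-(k : ℝ)) (k : ℝ)).indicator f →
        (∀ g : Lp ℂ 2 μ,
          (g : Ω → ℂ) =ᵐ[μ] (m ⁻¹' Set.Icc a b).indicator (Pm fk) → g ∈ M) ∧
        (∀ g : Lp ℂ 2 μ,
          (g : Ω → ℂ) =ᵐ[μ] (m ⁻¹' Set.Icc a b).indicator f → g ∈ M) := by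
  intro f hf a b hab
  -- the projection is norm-nonincreasing
  have hPle : ∀ y : Lp ℂ 2 μ, ‖Pm y‖ ≤ ‖y‖ := by
    intro y
    have h1 : ⟪y - Pm y, Pm y⟫_ℂ = 0 := (hPm y).2 (Pm y) (hPm y).1
    have h2 : ‖(y - Pm y) + Pm y‖ * ‖(y - Pm y) + Pm y‖
        = ‖y - Pm y‖ * ‖y - Pm y‖ + ‖Pm y‖ * ‖Pm y‖ :=
      norm_add_sq_eq_norm_sq_add_norm_sq_of_inner_eq_zero _ _ h1
    rw [sub_add_cancel] at h2
    nlinarith [norm_nonneg (Pm y), norm_nonneg y, norm_nonneg (y - Pm y)]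
  -- the projection fixes M
  have hPfix : ∀ x : Lp ℂ 2 μ, x ∈ M → Pm x = x := by
    intro x hx
    have h1 : x - Pm x ∈ M := M.sub_mem hx (hPm x).1
    have h2 : ⟪x - Pm x, x - Pm x⟫_ℂ = 0 := (hPm x).2 _ h1
    have h3 : x - Pm x = 0 := inner_self_eq_zero.mp h2
    have := sub_eq_zero.mp h3
    exact this.symm
  -- the key statement
  have key : ∀ (k : ℕ) (fk : Lp ℂ 2 μ),
      (fk : Ω → ℂ) =ᵐ[μ] (m ⁻¹' Set.Icc (-(k : ℝ)) (k : ℝ)).indicator f →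
      ∀ g : Lp ℂ 2 μ,
        (g : Ω → ℂ) =ᵐ[μ] (m ⁻¹' Set.Icc a b).indicator (Pm fk) → g ∈ M := by
    intro k fk hfk g hg
    set h : Lp ℂ 2 μ := Pm fk with hh
    have hbd_ae : ∀ n : ℕ, ∀ᵐ ω ∂μ,
        ‖(m ω : ℂ) ^ n * (fk : Ω → ℂ) ω‖ ≤ ‖(((k:ℝ)^n : ℝ) • (fk : Ω → ℂ)) ω‖ := by
      intro n
      filter_upwards [hfk] with ω hω
      by_cases hmem : ω ∈ m ⁻¹' Set.Icc (-(k:ℝ)) (k:ℝ)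
      · have habs : |m ω| ≤ (k:ℝ) := abs_le.2 ⟨hmem.1, hmem.2⟩
        simp only [Pi.smul_apply, norm_smul, norm_mul, norm_pow, Complex.norm_real,
          Real.norm_eq_abs, abs_pow]
        have h2 : |(k:ℝ)| = (k:ℝ) := abs_of_nonneg (Nat.cast_nonneg k)
        rw [h2]
        have h3 : |m ω| ^ n ≤ (k:ℝ) ^ n := pow_le_pow_left₀ (abs_nonneg _) habs n
        have h4 : (0:ℝ) ≤ ‖(fk : Ω → ℂ) ω‖ := norm_nonneg _
        nlinarith [pow_nonneg (abs_nonneg (m ω)) n]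
      · rw [hω, Set.indicator_of_notMem hmem]
        simp only [mul_zero, norm_zero, Pi.smul_apply, norm_smul]
        positivity
    have hA1 : ∀ n : ℕ, MemLp (fun ω => (m ω : ℂ) ^ n * (fk : Ω → ℂ) ω) 2 μ := by
      intro n
      refine MemLp.of_le ((Lp.memLp fk).const_smul ((k:ℝ)^n)) ?_ (hbd_ae n)
      exact (((Complex.measurable_ofReal.comp hm).pow_const n).aestronglyMeasurable).mul
        (Lp.aestronglyMeasurable fk)
    have hA2 : ∀ n : ℕ, ∃ hmem : MemLp (fun ω => (m ω : ℂ) ^ n * (h : Ω → ℂ) ω) 2 μ,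
        hmem.toLp _ = Pm ((hA1 n).toLp _) := by
      intro n
      induction n with
      | zero =>
        have hmem : MemLp (fun ω => (m ω : ℂ) ^ 0 * (h : Ω → ℂ) ω) 2 μ := by
          simp only [pow_zero, one_mul]
          exact Lp.memLp h
        refine ⟨hmem, ?_⟩
        have e1 : hmem.toLp _ = h :=
          Lp.ext (hmem.coeFn_toLp.trans (Eventually.of_forall fun ω => by simp))
        have e2 : (hA1 0).toLp _ = fk :=
          Lp.ext ((hA1 0).coeFn_toLp.trans (Eventually.of_forall fun ω => by simp))
        rw [e1, e2]
      | succ n ih =>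
        obtain ⟨hmem, heq⟩ := ih
        have hFdom : (hA1 n).toLp _ ∈ T.domain := by
          rw [hTdom]
          refine (memLp_congr_ae ?_).2 (hA1 (n+1))
          filter_upwards [(hA1 n).coeFn_toLp] with ω hω
          simp only [hω]
          ring
        obtain ⟨hdom0, hval0⟩ := hred ⟨(hA1 n).toLp _, hFdom⟩
        have hdom' : hmem.toLp _ ∈ T.domain := by rw [heq]; exact hdom0
        have hmem' : MemLp (fun ω => (m ω : ℂ) ^ (n+1) * (h : Ω → ℂ) ω) 2 μ := by
          refine (memLp_congr_ae ?_).2 ((hTdom _).1 hdom')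
          filter_upwards [hmem.coeFn_toLp] with ω hω
          simp only [hω]
          ring
        refine ⟨hmem', ?_⟩
        have e1 : T ⟨hmem.toLp _, hdom'⟩ = hmem'.toLp _ := by
          refine Lp.ext (((hTval ⟨hmem.toLp _, hdom'⟩).trans ?_).trans hmem'.coeFn_toLp.symm)
          filter_upwards [hmem.coeFn_toLp] with ω hω
          simp only [hω]
          ring
        have e2 : T ⟨(hA1 n).toLp _, hFdom⟩ = (hA1 (n+1)).toLp _ := by
          refine Lp.ext (((hTval ⟨(hA1 n).toLp _, hFdom⟩).trans ?_).trans
            ((hA1 (n+1)).coeFn_toLp).symm)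
          filter_upwards [(hA1 n).coeFn_toLp] with ω hω
          simp only [hω]
          ring
        have hsub : (⟨hmem.toLp _, hdom'⟩ : T.domain)
            = ⟨Pm ((⟨(hA1 n).toLp _, hFdom⟩ : T.domain) : Lp ℂ 2 μ), hdom0⟩ :=
          Subtype.ext (by simpa using heq)
        rw [← e1, hsub, hval0, e2]
    have hA3 : ∀ p : Polynomial ℝ,
        ∃ hmem : MemLp (fun ω => ((p.eval (m ω) : ℝ) : ℂ) * (h : Ω → ℂ) ω) 2 μ,
          hmem.toLp _ ∈ M := by
      intro p
      induction p using Polynomial.induction_on' with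
      | add p q hp hq =>
        obtain ⟨hp1, hp2⟩ := hp
        obtain ⟨hq1, hq2⟩ := hq
        have hmem : MemLp (fun ω => (((p+q).eval (m ω) : ℝ) : ℂ) * (h : Ω → ℂ) ω) 2 μ := by
          refine (memLp_congr_ae (Eventually.of_forall fun ω => ?_)).2 (hp1.add hq1)
          simp only [Polynomial.eval_add, Pi.add_apply]
          push_cast
          ring
        refine ⟨hmem, ?_⟩
        have e : hmem.toLp _ = hp1.toLp _ + hq1.toLp _ := by
          rw [← MemLp.toLp_add]
          exact MemLp.toLp_congr _ _ (Eventually.of_forall fun ω => by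
            simp only [Polynomial.eval_add, Pi.add_apply]; push_cast; ring)
        rw [e]
        exact M.add_mem hp2 hq2
      | monomial n c =>
        obtain ⟨hmem_n, heq_n⟩ := hA2 n
        have hmem : MemLp
            (fun ω => (((Polynomial.monomial n c).eval (m ω) : ℝ) : ℂ) * (h : Ω → ℂ) ω) 2 μ := by
          refine (memLp_congr_ae (Eventually.of_forall fun ω => ?_)).2
            (hmem_n.const_mul (c : ℂ))
          simp only [Polynomial.eval_monomial]
          push_cast
          ring
        refine ⟨hmem, ?_⟩
        have e : hmem.toLp _ = (c : ℂ) • hmem_n.toLp _ := by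
          rw [← MemLp.toLp_const_smul (c : ℂ) hmem_n]
          exact MemLp.toLp_congr _ _ (Eventually.of_forall fun ω => by
            simp only [Polynomial.eval_monomial, Pi.smul_apply, smul_eq_mul]
            push_cast
            ring)
        rw [e, heq_n]
        exact M.smul_mem _ (hPm _).1
    have hCfin : eLpNorm (fk : Ω → ℂ) 2 μ ≠ ∞ := (Lp.memLp fk).2.ne
    have hbdfk : ∀ n : ℕ, eLpNorm (fun ω => (m ω : ℂ) ^ n * (fk : Ω → ℂ) ω) 2 μ
        ≤ ENNReal.ofReal ((k:ℝ)^n) * eLpNorm (fk : Ω → ℂ) 2 μ := by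
      intro n
      refine (eLpNorm_mono_ae (hbd_ae n)).trans_eq ?_
      rw [eLpNorm_const_smul, Real.enorm_eq_ofReal (by positivity)]
    have hmh : ∀ n : ℕ, eLpNorm (fun ω => (m ω : ℂ) ^ n * (h : Ω → ℂ) ω) 2 μ
        ≤ ENNReal.ofReal ((k:ℝ)^n) * eLpNorm (fk : Ω → ℂ) 2 μ := by
      intro n
      obtain ⟨hmem, heq⟩ := hA2 n
      have h2 : ‖hmem.toLp _‖ ≤ ‖(hA1 n).toLp _‖ := by
        rw [heq]
        exact hPle _
      rw [Lp.norm_toLp, Lp.norm_toLp] at h2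
      have h3 := ENNReal.ofReal_le_ofReal h2
      rw [ENNReal.ofReal_toReal hmem.2.ne, ENNReal.ofReal_toReal (hA1 n).2.ne] at h3
      exact h3.trans (hbdfk n)
    have hvanish : ∀ᵐ ω ∂μ, (k:ℝ) < |m ω| → (h : Ω → ℂ) ω = 0 := by
      have main : ∀ j : ℕ, ∀ᵐ ω ∂μ,
          ((k:ℝ) + 1/((j:ℝ)+1) ≤ |m ω|) → (h : Ω → ℂ) ω = 0 := by
        intro j
        set r : ℝ := (k:ℝ) + 1/((j:ℝ)+1) with hr
        have hj1 : (0:ℝ) < 1/((j:ℝ)+1) := by positivity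
        have hkr : (k:ℝ) < r := by rw [hr]; linarith
        have hr0 : (0:ℝ) < r := lt_of_le_of_lt (Nat.cast_nonneg k) hkr
        set A : Set Ω := {ω | r ≤ |m ω|} with hA
        have hAmeas : MeasurableSet A :=
          measurableSet_le measurable_const (continuous_abs.measurable.comp hm)
        have hEfin : eLpNorm (A.indicator (h : Ω → ℂ)) 2 μ ≠ ∞ :=
          ((eLpNorm_indicator_le _).trans_lt (Lp.memLp h).2).ne
        have hEbound : ∀ n : ℕ,
            ENNReal.ofReal (r ^ n) * eLpNorm (A.indicator (h : Ω → ℂ)) 2 μ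
              ≤ ENNReal.ofReal ((k:ℝ)^n) * eLpNorm (fk : Ω → ℂ) 2 μ := by
          intro n
          have hmono : eLpNorm ((r ^ n : ℝ) • A.indicator (h : Ω → ℂ)) 2 μ
              ≤ eLpNorm (fun ω => (m ω : ℂ) ^ n * (h : Ω → ℂ) ω) 2 μ := by
            refine eLpNorm_mono_ae (Eventually.of_forall fun ω => ?_)
            by_cases hω : ω ∈ A
            · rw [Pi.smul_apply, Set.indicator_of_mem hω]
              simp only [norm_smul, norm_mul, norm_pow, Complex.norm_real,
                Real.norm_eq_abs, abs_pow]
              have h1 : |r| = r := abs_of_nonneg hr0.le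
              have h2 : r ^ n ≤ |m ω| ^ n := pow_le_pow_left₀ hr0.le hω n
              have h4 : (0:ℝ) ≤ ‖(h : Ω → ℂ) ω‖ := norm_nonneg _
              rw [h1]
              nlinarith
            · rw [Pi.smul_apply, Set.indicator_of_notMem hω]
              simp only [smul_zero, norm_zero]
              positivity
          have hsmul : eLpNorm ((r ^ n : ℝ) • A.indicator (h : Ω → ℂ)) 2 μ
              = ENNReal.ofReal (r ^ n) * eLpNorm (A.indicator (h : Ω → ℂ)) 2 μ := by
            rw [eLpNorm_const_smul, Real.enorm_eq_ofReal (by positivity)]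
          rw [← hsmul]
          exact hmono.trans (hmh n)
        have hEreal : ∀ n : ℕ, (eLpNorm (A.indicator (h : Ω → ℂ)) 2 μ).toReal
            ≤ ((k:ℝ)/r) ^ n * (eLpNorm (fk : Ω → ℂ) 2 μ).toReal := by
          intro n
          have h2 := ENNReal.toReal_mono
            (ENNReal.mul_ne_top ENNReal.ofReal_ne_top hCfin) (hEbound n)
          rw [ENNReal.toReal_mul, ENNReal.toReal_mul, ENNReal.toReal_ofReal (by positivity),
            ENNReal.toReal_ofReal (by positivity)] at h2
          rw [div_pow, div_mul_eq_mul_div, le_div_iff₀ (by positivity)]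
          calc (eLpNorm (A.indicator (h : Ω → ℂ)) 2 μ).toReal * r ^ n
              = r ^ n * (eLpNorm (A.indicator (h : Ω → ℂ)) 2 μ).toReal := mul_comm _ _
            _ ≤ (k:ℝ)^n * (eLpNorm (fk : Ω → ℂ) 2 μ).toReal := h2
        have hlim0 : Tendsto (fun n => ((k:ℝ)/r)^n * (eLpNorm (fk : Ω → ℂ) 2 μ).toReal)
            atTop (𝓝 0) := by
          have h1 : |(k:ℝ)/r| < 1 := by
            rw [abs_of_nonneg (by positivity), div_lt_one hr0]
            exact hkr
          simpa using (tendsto_pow_atTop_nhds_zero_of_abs_lt_one h1).mul_const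
            ((eLpNorm (fk : Ω → ℂ) 2 μ).toReal)
        have hE0 : (eLpNorm (A.indicator (h : Ω → ℂ)) 2 μ).toReal = 0 :=
          le_antisymm (ge_of_tendsto' hlim0 fun n => hEreal n) ENNReal.toReal_nonneg
        have hE0' : eLpNorm (A.indicator (h : Ω → ℂ)) 2 μ = 0 := by
          rcases (ENNReal.toReal_eq_zero_iff _).1 hE0 with h1 | h1
          · exact h1
          · exact absurd h1 hEfin
        have hind := (eLpNorm_eq_zero_iff
          ((Lp.aestronglyMeasurable h).indicator hAmeas) (by norm_num)).1 hE0'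
        filter_upwards [hind] with ω hω hmem
        have hωA : ω ∈ A := hmem
        calc (h : Ω → ℂ) ω = A.indicator (h : Ω → ℂ) ω := (Set.indicator_of_mem hωA _).symm
          _ = 0 := by rw [hω]; rfl
      filter_upwards [ae_all_iff.2 main] with ω hω hklt
      obtain ⟨j, hj⟩ := exists_nat_one_div_lt (show (0:ℝ) < |m ω| - (k:ℝ) by linarith)
      exact hω j (by linarith)
    -- continuous approximations of the indicator of [a,b]
    set gs : ℕ → ℝ → ℝ :=
      fun n x => max (1 - (n:ℝ) * Metric.infDist x (Set.Icc a b)) 0 with hgs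
    have hgcont : ∀ n, Continuous (gs n) := fun n =>
      ((continuous_const.sub (continuous_const.mul
        (Metric.continuous_infDist_pt _))).max continuous_const)
    have hg0 : ∀ n x, 0 ≤ gs n x := fun n x => le_max_right _ _
    have hg1 : ∀ n x, gs n x ≤ 1 := by
      intro n x
      have h1 : (0:ℝ) ≤ (n:ℝ) * Metric.infDist x (Set.Icc a b) :=
        mul_nonneg (Nat.cast_nonneg n) Metric.infDist_nonneg
      simp only [hgs]
      apply max_le _ zero_le_one
      linarith
    have hgtend : ∀ x, Tendsto (fun n => gs n x) atTop
        (𝓝 ((Set.Icc a b).indicator (fun _ => (1:ℝ)) x)) := by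
      intro x
      by_cases hx : x ∈ Set.Icc a b
      · have : ∀ n, gs n x = 1 := by
          intro n
          simp [hgs, Metric.infDist_zero_of_mem hx]
        rw [Set.indicator_of_mem hx]
        simpa [this] using tendsto_const_nhds
      · have hd : 0 < Metric.infDist x (Set.Icc a b) :=
          (isClosed_Icc.notMem_iff_infDist_pos (Set.nonempty_Icc.2 hab)).1 hx
        have hev : ∀ᶠ n : ℕ in atTop, gs n x = 0 := by
          have := (tendsto_natCast_atTop_atTop (R := ℝ)).atTop_mul_const hd
          filter_upwards [this.eventually_ge_atTop 1] with n hn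
          simp only [hgs]
          apply max_eq_right
          linarith
        rw [Set.indicator_of_notMem hx]
        exact (tendsto_const_nhds).congr' (hev.mono fun n hn => hn.symm)
    -- polynomial approximations
    have hpoly : ∀ n : ℕ, ∃ p : Polynomial ℝ,
        ∀ x ∈ Set.Icc (-(k:ℝ)) (k:ℝ), |p.eval x - gs n x| < 1/((n:ℝ)+1) :=
      fun n => exists_polynomial_near_of_continuousOn _ _ _
        ((hgcont n).continuousOn) _ (by positivity)
    choose ps hps using hpoly
    have hps2 : ∀ n : ℕ, ∀ x ∈ Set.Icc (-(k:ℝ)) (k:ℝ), |(ps n).eval x| ≤ 2 := by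
      intro n x hx
      have h1 := hps n x hx
      have h2 : 1/((n:ℝ)+1) ≤ 1 := by
        rw [div_le_one (by positivity)]
        simp
      have h3 := abs_sub_abs_le_abs_sub ((ps n).eval x) (gs n x)
      have h4 : |gs n x| ≤ 1 := abs_le.2 ⟨by linarith [hg0 n x], hg1 n x⟩
      linarith
    have hpstend : ∀ x ∈ Set.Icc (-(k:ℝ)) (k:ℝ),
        Tendsto (fun n => (ps n).eval x) atTop
          (𝓝 ((Set.Icc a b).indicator (fun _ => (1:ℝ)) x)) := by
      intro x hx
      have hsq : Tendsto
          (fun n : ℕ => 1/((n:ℝ)+1) + |gs n x - (Set.Icc a b).indicator (fun _ => (1:ℝ)) x|)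
          atTop (𝓝 0) := by
        have h1 : Tendsto (fun n : ℕ => 1/((n:ℝ)+1)) atTop (𝓝 0) :=
          tendsto_one_div_add_atTop_nhds_zero_nat
        have h2 : Tendsto (fun n => |gs n x - (Set.Icc a b).indicator (fun _ => (1:ℝ)) x|)
            atTop (𝓝 0) := by
          have := (hgtend x).sub (tendsto_const_nhds
            (x := (Set.Icc a b).indicator (fun _ => (1:ℝ)) x))
          rw [sub_self] at this
          simpa using this.abs
        simpa using h1.add h2
      have hbound : ∀ n : ℕ, ‖(ps n).eval x - (Set.Icc a b).indicator (fun _ => (1:ℝ)) x‖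
          ≤ 1/((n:ℝ)+1) + |gs n x - (Set.Icc a b).indicator (fun _ => (1:ℝ)) x| := by
        intro n
        rw [Real.norm_eq_abs]
        have h1 := (hps n x hx).le
        calc |(ps n).eval x - (Set.Icc a b).indicator (fun _ => (1:ℝ)) x|
            ≤ |(ps n).eval x - gs n x|
              + |gs n x - (Set.Icc a b).indicator (fun _ => (1:ℝ)) x| := abs_sub_le _ _ _
          _ ≤ _ := by linarith
      have h0 : Tendsto (fun n => (ps n).eval x
          - (Set.Icc a b).indicator (fun _ => (1:ℝ)) x) atTop (𝓝 0) :=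
        squeeze_zero_norm hbound hsq
      have := h0.add (tendsto_const_nhds
        (x := (Set.Icc a b).indicator (fun _ => (1:ℝ)) x))
      simpa using this
    -- assemble: polynomial multiples converge to the indicator multiple
    have htar : MemLp ((m ⁻¹' Set.Icc a b).indicator (h : Ω → ℂ)) 2 μ :=
      (Lp.memLp h).indicator (hm measurableSet_Icc)
    set F : ℕ → Ω → ℂ := fun n ω => (((ps n).eval (m ω) : ℝ) : ℂ) * (h : Ω → ℂ) ω with hF
    have hFaesm : ∀ n, AEStronglyMeasurable (F n) μ := fun n =>
      ((Complex.measurable_ofReal.comp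
        (((ps n).continuous).measurable.comp hm)).aestronglyMeasurable).mul
        (Lp.aestronglyMeasurable h)
    have hFmem : ∀ n, MemLp (F n) 2 μ := fun n => (hA3 (ps n)).choose
    have hFM : ∀ n, (hFmem n).toLp (F n) ∈ M := by
      intro n
      have h1 := (hA3 (ps n)).choose_spec
      have h2 : (hFmem n).toLp (F n) = ((hA3 (ps n)).choose).toLp _ := rfl
      rw [h2]
      exact h1
    have hdom : ∀ n, ∀ᵐ ω ∂μ, ‖F n ω‖ ≤ ‖((2:ℝ) • (h : Ω → ℂ)) ω‖ := by
      intro n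
      filter_upwards [hvanish] with ω hv
      simp only [hF, Pi.smul_apply, norm_smul, norm_mul, Complex.norm_real, Real.norm_eq_abs]
      by_cases hk : |m ω| ≤ (k:ℝ)
      · have h1 : m ω ∈ Set.Icc (-(k:ℝ)) (k:ℝ) := by
          rcases abs_le.1 hk with ⟨h1, h2⟩
          exact ⟨h1, h2⟩
        have h2 := hps2 n (m ω) h1
        have h3 : (0:ℝ) ≤ ‖(h : Ω → ℂ) ω‖ := norm_nonneg _
        have h4 : |(2:ℝ)| = 2 := by norm_num
        rw [h4]
        nlinarith [abs_nonneg ((ps n).eval (m ω))]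
      · rw [hv (lt_of_not_ge hk)]
        simp
    have hlim : ∀ᵐ ω ∂μ, Tendsto (fun n => F n ω) atTop
        (𝓝 ((m ⁻¹' Set.Icc a b).indicator (h : Ω → ℂ) ω)) := by
      filter_upwards [hvanish] with ω hv
      by_cases hk : |m ω| ≤ (k:ℝ)
      · have h1 : m ω ∈ Set.Icc (-(k:ℝ)) (k:ℝ) := by
          rcases abs_le.1 hk with ⟨h1, h2⟩
          exact ⟨h1, h2⟩
        have h2 : (m ⁻¹' Set.Icc a b).indicator (h : Ω → ℂ) ω
            = (((Set.Icc a b).indicator (fun _ => (1:ℝ)) (m ω) : ℝ) : ℂ) * (h : Ω → ℂ) ω := by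
          by_cases hab' : m ω ∈ Set.Icc a b
          · rw [Set.indicator_of_mem (show ω ∈ m ⁻¹' Set.Icc a b from hab') ,
              Set.indicator_of_mem hab']
            simp
          · rw [Set.indicator_of_notMem (show ω ∉ m ⁻¹' Set.Icc a b from hab'),
              Set.indicator_of_notMem hab']
            simp
        rw [h2]
        exact (Tendsto.comp (Complex.continuous_ofReal.tendsto _)
          (hpstend (m ω) h1)).mul_const _
      · have hz : (h : Ω → ℂ) ω = 0 := hv (lt_of_not_ge hk)
        have h2 : ∀ n, F n ω = 0 := by
          intro n
          simp [hF, hz]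
        have h3 : (m ⁻¹' Set.Icc a b).indicator (h : Ω → ℂ) ω = 0 := by
          by_cases hab' : ω ∈ m ⁻¹' Set.Icc a b
          · rw [Set.indicator_of_mem hab', hz]
          · rw [Set.indicator_of_notMem hab']
        rw [h3]
        simpa [h2] using tendsto_const_nhds (α := ℕ) (x := (0:ℂ))
    have hds := stmt18_dct F ((m ⁻¹' Set.Icc a b).indicator (h : Ω → ℂ))
      ((2:ℝ) • (h : Ω → ℂ)) hFaesm ((Lp.memLp h).const_smul (2:ℝ)) hdom hlim
    have hLp : Tendsto (fun n => (hFmem n).toLp (F n)) atTop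
        (𝓝 (htar.toLp _)) := by
      rw [Lp.tendsto_Lp_iff_tendsto_eLpNorm'']
      exact hds.congr fun n => by rfl
    have hmemLim : htar.toLp _ ∈ M :=
      hMclosed.mem_of_tendsto hLp (Eventually.of_forall hFM)
    have hgeq : g = htar.toLp _ := Lp.ext (hg.trans htar.coeFn_toLp.symm)
    rw [hgeq]
    exact hmemLim
  intro k fk hfk
  refine ⟨key k fk hfk, ?_⟩
  intro g hg
  have htarf : MemLp ((m ⁻¹' Set.Icc a b).indicator (f : Ω → ℂ)) 2 μ :=
    (Lp.memLp f).indicator (hm measurableSet_Icc)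
  have hu : ∀ j : ℕ, MemLp ((m ⁻¹' Set.Icc (-(j:ℝ)) (j:ℝ)).indicator (f : Ω → ℂ)) 2 μ :=
    fun j => (Lp.memLp f).indicator (hm measurableSet_Icc)
  set u : ℕ → Lp ℂ 2 μ := fun j => (hu j).toLp _ with hudef
  have hv : ∀ j, MemLp ((m ⁻¹' Set.Icc a b).indicator (Pm (u j) : Ω → ℂ)) 2 μ :=
    fun j => (Lp.memLp _).indicator (hm measurableSet_Icc)
  have hvM : ∀ j, (hv j).toLp _ ∈ M :=
    fun j => key j (u j) ((hu j).coeFn_toLp) _ ((hv j).coeFn_toLp)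
  have hulim : Tendsto u atTop (𝓝 f) := by
    have hds := stmt18_dct
      (fun j => (m ⁻¹' Set.Icc (-(j:ℝ)) (j:ℝ)).indicator (f : Ω → ℂ))
      (f : Ω → ℂ) (f : Ω → ℂ)
      (fun j => (Lp.aestronglyMeasurable f).indicator (hm measurableSet_Icc))
      (Lp.memLp f)
      (fun j => Eventually.of_forall fun ω => norm_indicator_le_norm_self _ _)
      (Eventually.of_forall fun ω => ?_)
    · rw [Lp.tendsto_Lp_iff_tendsto_eLpNorm']
      refine hds.congr fun j => ?_
      refine (eLpNorm_congr_ae ?_).symm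
      filter_upwards [(hu j).coeFn_toLp] with ω h2
      rw [Pi.sub_apply, h2]
    · obtain ⟨N, hN⟩ := exists_nat_ge |m ω|
      have hev : ∀ᶠ j : ℕ in atTop,
          (m ⁻¹' Set.Icc (-(j:ℝ)) (j:ℝ)).indicator (f : Ω → ℂ) ω = (f : Ω → ℂ) ω := by
        filter_upwards [eventually_ge_atTop N] with j hj
        have hj' : |m ω| ≤ (j:ℝ) := hN.trans (Nat.cast_le.2 hj)
        rcases abs_le.1 hj' with ⟨h1, h2⟩
        exact Set.indicator_of_mem (show ω ∈ m ⁻¹' Set.Icc (-(j:ℝ)) (j:ℝ) from ⟨h1, h2⟩) _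
      exact tendsto_const_nhds.congr' (hev.mono fun j hj => hj.symm)
  have hPulim : Tendsto (fun j => Pm (u j)) atTop (𝓝 f) := by
    have := (Pm.continuous.tendsto f).comp hulim
    rwa [hPfix f hf] at this
  have hle : ∀ j : ℕ, ‖(hv j).toLp _ - htarf.toLp _‖ ≤ ‖Pm (u j) - f‖ := by
    intro j
    have e1 : eLpNorm (((hv j).toLp _ - htarf.toLp _ : Lp ℂ 2 μ) : Ω → ℂ) 2 μ
        = eLpNorm ((m ⁻¹' Set.Icc a b).indicator
            ((Pm (u j) : Ω → ℂ) - (f : Ω → ℂ))) 2 μ := by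
      refine eLpNorm_congr_ae ?_
      filter_upwards [Lp.coeFn_sub ((hv j).toLp _) (htarf.toLp _), (hv j).coeFn_toLp,
        htarf.coeFn_toLp] with ω h1 h2 h3
      rw [h1, Pi.sub_apply, h2, h3]
      by_cases hω : ω ∈ m ⁻¹' Set.Icc a b
      · simp [Set.indicator_of_mem hω]
      · simp [Set.indicator_of_notMem hω]
    have e2 : eLpNorm ((Pm (u j) : Ω → ℂ) - (f : Ω → ℂ)) 2 μ
        = eLpNorm ((Pm (u j) - f : Lp ℂ 2 μ) : Ω → ℂ) 2 μ :=
      (eLpNorm_congr_ae (Lp.coeFn_sub _ _)).symm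
    rw [Lp.norm_def, Lp.norm_def, e1]
    refine ENNReal.toReal_mono (Lp.eLpNorm_ne_top _) ?_
    calc eLpNorm ((m ⁻¹' Set.Icc a b).indicator
          ((Pm (u j) : Ω → ℂ) - (f : Ω → ℂ))) 2 μ
        ≤ eLpNorm ((Pm (u j) : Ω → ℂ) - (f : Ω → ℂ)) 2 μ := eLpNorm_indicator_le _
      _ = _ := e2
  have hvlim : Tendsto (fun j => (hv j).toLp _) atTop (𝓝 (htarf.toLp _)) := by
    rw [tendsto_iff_norm_sub_tendsto_zero]
    have h1 : Tendsto (fun j => ‖Pm (u j) - f‖) atTop (𝓝 0) :=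
      tendsto_iff_norm_sub_tendsto_zero.1 hPulim
    exact squeeze_zero (fun j => norm_nonneg _) hle h1
  have hmemLim : htarf.toLp _ ∈ M :=
    hMclosed.mem_of_tendsto hvlim (Eventually.of_forall hvM)
  have hgeq : g = htarf.toLp _ := Lp.ext (hg.trans htarf.coeFn_toLp.symm)
  rw [hgeq]
  exact hmemLim
end
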